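/- Let U ⊆ ℝⁿ be open, let f : U → ℝ be smooth, and for a fixed k ≥ 0 let g^{μ₁…μₖ} : U → ℝ be smooth functions symmetric in their indices. Then, with summation over all repeated greek indices, (∂_{μ₁}⋯∂_{μₖ} f) · g^{μ₁…μₖ} = Σ_{p+q=k} binom(p+q, p) (−1)^q · ∂_{μ₁}⋯∂_{μ_p}( f · ∂_{ν₁}⋯∂_{ν_q} g^{μ₁…μ_p ν₁…ν_q} ). -/

import Mathlib

/-!
Write `T(a, j)` (`mixedDerivSum f g a j`) for
`∑_μ ∂_{μ₁…μₐ}(∂_{μₐ₊₁…μₐ₊ⱼ} f · ∂_{μₐ₊ⱼ₊₁…μₖ} g^μ)`, so that the left-hand side is `T(0, k)` and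
the `p`-th summand on the right is `T(p, 0)`. The Leibniz rule applied to the innermost outer
derivative `∂_{μₐ₊₁}` of `T(a + 1, j)` gives two terms: one is `T(a, j + 1)`, and the other becomes
`T(a, j)` after relabelling the indices by the cycle `(a+1 a+2 … a+j+1)`, which does not change
`g` because `g` is symmetric. Hence `T(a + 1, j) = T(a, j + 1) + T(a, j)`, and Pascal's rule gives
`T(p, 0) = ∑_i binom(p, i) T(0, i)`. The right-hand side is therefore the inverse binomial
transform of this sequence evaluated at `k`, which is `T(0, k)`.
-/

open scoped BigOperators

noncomputable section

/-- Partial derivative of a function on `ℝⁿ` in the coordinate direction `μ`. -/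
def pd {n : ℕ} (μ : Fin n) (f : (Fin n → ℝ) → ℝ) : (Fin n → ℝ) → ℝ :=
  fun x => fderiv ℝ f x (Pi.single μ 1)

/-- Iterated partial derivatives `∂_{μ₁}⋯∂_{μₖ}` along a list of coordinate directions. -/
def pds {n : ℕ} : List (Fin n) → ((Fin n → ℝ) → ℝ) → (Fin n → ℝ) → ℝ
  | [], f => f
  | μ :: l, f => pd μ (pds l f)

open Finset Set

section Calculus

variable {n : ℕ} {U : Set (Fin n → ℝ)} {F G : (Fin n → ℝ) → ℝ}

theorem pds_append (l₁ l₂ : List (Fin n)) :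
    pds (l₁ ++ l₂) F = pds l₁ (pds l₂ F) := by
  induction l₁ with
  | nil => rfl
  | cons μ l ih => rw [List.cons_append, pds, ih, pds]

theorem ContDiffOn.differentiableAt_of_isOpen (hU : IsOpen U)
    (hF : ContDiffOn ℝ (⊤ : ℕ∞) F U) {x : Fin n → ℝ} (hx : x ∈ U) : DifferentiableAt ℝ F x :=
  (hF.differentiableOn (by simp)).differentiableAt (hU.mem_nhds hx)

theorem ContDiffOn.pd (hU : IsOpen U) (hF : ContDiffOn ℝ (⊤ : ℕ∞) F U) (μ : Fin n) :
    ContDiffOn ℝ (⊤ : ℕ∞) (pd μ F) U := by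
  have hderiv : ContDiffOn ℝ (⊤ : ℕ∞) (fderivWithin ℝ F U) U :=
    hF.fderivWithin hU.uniqueDiffOn (by exact_mod_cast le_top)
  refine ((ContinuousLinearMap.apply ℝ ℝ (Pi.single μ 1)).contDiff.comp_contDiffOn
    hderiv).congr fun x hx => ?_
  simp [_root_.pd, fderivWithin_of_isOpen hU hx]

theorem ContDiffOn.pds (hU : IsOpen U) (hF : ContDiffOn ℝ (⊤ : ℕ∞) F U) (l : List (Fin n)) :
    ContDiffOn ℝ (⊤ : ℕ∞) (pds l F) U := by
  induction l with
  | nil => exact hF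
  | cons μ l ih => exact ih.pd hU μ

theorem pd_congr (hU : IsOpen U) (h : EqOn F G U) (μ : Fin n) : EqOn (pd μ F) (pd μ G) U :=
  fun x hx => by
    rw [pd, pd, (Filter.eventuallyEq_of_mem (hU.mem_nhds hx) h).fderiv_eq]

theorem pds_congr (hU : IsOpen U) (h : EqOn F G U) (l : List (Fin n)) :
    EqOn (pds l F) (pds l G) U := by
  induction l with
  | nil => exact h
  | cons μ l ih => exact pd_congr hU ih μ

theorem pd_add_apply {x : Fin n → ℝ} (hF : DifferentiableAt ℝ F x)
    (hG : DifferentiableAt ℝ G x) (μ : Fin n) :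
    pd μ (F + G) x = pd μ F x + pd μ G x := by
  simp [pd, fderiv_add hF hG]

theorem pd_mul_apply {x : Fin n → ℝ} (hF : DifferentiableAt ℝ F x)
    (hG : DifferentiableAt ℝ G x) (μ : Fin n) :
    pd μ (F * G) x = pd μ F x * G x + F x * pd μ G x := by
  simp [pd, fderiv_mul hF hG]
  ring

theorem pds_add (hU : IsOpen U) (hF : ContDiffOn ℝ (⊤ : ℕ∞) F U)
    (hG : ContDiffOn ℝ (⊤ : ℕ∞) G U) (l : List (Fin n)) :
    EqOn (pds l (F + G)) (pds l F + pds l G) U := by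
  induction l with
  | nil => exact fun _ _ => rfl
  | cons μ l ih =>
    intro x hx
    rw [pds, pd_congr hU ih μ hx]
    exact pd_add_apply ((hF.pds hU l).differentiableAt_of_isOpen hU hx)
      ((hG.pds hU l).differentiableAt_of_isOpen hU hx) μ

theorem pds_concat_mul (hU : IsOpen U) (hF : ContDiffOn ℝ (⊤ : ℕ∞) F U)
    (hG : ContDiffOn ℝ (⊤ : ℕ∞) G U) (l : List (Fin n)) (μ : Fin n) {x : Fin n → ℝ}
    (hx : x ∈ U) :
    pds (l ++ [μ]) (F * G) x = pds l (pd μ F * G) x + pds l (F * pd μ G) x := by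
  have hLeibniz : EqOn (pds [μ] (F * G)) (pd μ F * G + F * pd μ G) U := fun y hy =>
    pd_mul_apply (hF.differentiableAt_of_isOpen hU hy) (hG.differentiableAt_of_isOpen hU hy) μ
  rw [pds_append, pds_congr hU hLeibniz l hx]
  exact pds_add hU ((hF.pd hU μ).mul hG) (hF.mul (hG.pd hU μ)) l hx

theorem pds_take_succ_mul (hU : IsOpen U) (hF : ContDiffOn ℝ (⊤ : ℕ∞) F U)
    (hG : ContDiffOn ℝ (⊤ : ℕ∞) G U)
    {L : List (Fin n)} {a : ℕ} (ha : a < L.length) (j : ℕ) {x : Fin n → ℝ} (hx : x ∈ U) :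
    pds (L.take (a + 1)) (pds ((L.drop (a + 1)).take j) F * pds (L.drop (a + 1 + j)) G) x
      = pds (L.take a) (pds ((L.drop a).take (j + 1)) F * pds (L.drop (a + (j + 1))) G) x
        + pds (L.take a)
            (pds ((L.drop (a + 1)).take j) F * pds (L[a] :: L.drop (a + 1 + j)) G) x := by
  rw [← L.take_concat_get' a ha, pds_concat_mul hU (hF.pds hU _) (hG.pds hU _) _ _ hx,
    L.drop_eq_getElem_cons ha, List.take_succ_cons, show a + (j + 1) = a + 1 + j by omega]
  rfl

end Calculus

theorem sum_choose_mul_neg_one_pow_mul_sum_choose {R : Type*} [CommRing R] (k : ℕ) (B : ℕ → R) :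
    ∑ p ∈ range (k + 1), (k.choose p : R) * (-1) ^ (k - p) *
        ∑ i ∈ range (p + 1), (p.choose i : R) * B i = B k := by
  have inner (i : ℕ) (hi : i ≤ k) :
      ∑ p ∈ Ico i (k + 1), (k.choose p : R) * (-1) ^ (k - p) * ((p.choose i : R) * B i)
        = (k.choose i : R) * B i * (1 + -1) ^ (k - i) := by
    rw [sum_Ico_eq_sum_range, add_pow, mul_sum, show k + 1 - i = k - i + 1 by omega]
    refine sum_congr rfl fun q hq => ?_
    have hq : q ≤ k - i := mem_range_succ_iff.mp hq
    have hchoose : (k.choose (i + q) : R) * ((i + q).choose i : R)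
        = (k.choose i : R) * ((k - i).choose q : R) := by
      have := Nat.choose_mul (n := k) (Nat.le_add_right i q)
      rw [Nat.add_sub_cancel_left] at this
      exact_mod_cast congrArg (Nat.cast : ℕ → R) this
    rw [one_pow, one_mul, show k - (i + q) = k - i - q by omega]
    linear_combination (-1 : R) ^ (k - i - q) * B i * hchoose
  calc _ = ∑ i ∈ range (k + 1), ∑ p ∈ Ico i (k + 1),
          (k.choose p : R) * (-1) ^ (k - p) * ((p.choose i : R) * B i) := by
        simp_rw [range_eq_Ico, mul_sum]
        exact (sum_Ico_Ico_comm 0 (k + 1) _).symm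
    _ = ∑ i ∈ range (k + 1), (k.choose i : R) * B i * (1 + -1) ^ (k - i) :=
        sum_congr rfl fun i hi => inner i (mem_range_succ_iff.mp hi)
    _ = B k := by
        rw [sum_eq_single_of_mem k (self_mem_range_succ k)]
        · simp
        · intro i hi hik
          rw [add_neg_cancel, zero_pow (by grind), mul_zero]

theorem List.ofFn_comp_cycleIcc {α : Type*} {k : ℕ} (ν : Fin k → α) {a j : ℕ} (h : a + j < k) :
    List.ofFn (ν ∘ Fin.cycleIcc ⟨a, by omega⟩ ⟨a + j, h⟩)
      = (List.ofFn ν).take a ++ ((List.ofFn ν).drop (a + 1)).take j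
          ++ ν ⟨a, by omega⟩ :: (List.ofFn ν).drop (a + 1 + j) := by
  have : NeZero k := ⟨by omega⟩
  apply List.ext_getElem
  · simp; omega
  · intro t ht _
    simp only [List.length_ofFn] at ht
    simp only [List.getElem_ofFn, Function.comp_apply, List.getElem_append, List.length_append,
      List.length_take, List.length_drop, List.length_ofFn, List.getElem_take, List.getElem_drop,
      List.getElem_cons, show min a k = a by omega, show min j (k - (a + 1)) = j by omega]
    split_ifs <;> congr 1
    · exact Fin.cycleIcc_of_lt (Fin.mk_lt_mk.mpr (by omega))
    · rw [Fin.cycleIcc_of_ge_of_lt (Fin.mk_le_mk.mpr (by omega)) (Fin.mk_lt_mk.mpr (by omega))]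
      ext
      rw [Fin.val_add_one_of_lt' (by simp only; omega)]
      simp only; omega
    · rw [show (⟨t, ht⟩ : Fin k) = ⟨a + j, h⟩ by ext; simp only; omega]
      exact Fin.cycleIcc_of_last (Fin.mk_le_mk.mpr (by omega))
    · rw [Fin.cycleIcc_of_gt (Fin.mk_lt_mk.mpr (by omega))]
      ext; simp only; omega

section MixedDerivSum

variable {n k : ℕ} {U : Set (Fin n → ℝ)} {f : (Fin n → ℝ) → ℝ}
  {g : (Fin k → Fin n) → (Fin n → ℝ) → ℝ}

def mixedDerivSum (f : (Fin n → ℝ) → ℝ) (g : (Fin k → Fin n) → (Fin n → ℝ) → ℝ) (a j : ℕ)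
    (x : Fin n → ℝ) : ℝ :=
  ∑ μ : Fin k → Fin n, pds ((List.ofFn μ).take a)
    (pds (((List.ofFn μ).drop a).take j) f * pds ((List.ofFn μ).drop (a + j)) (g μ)) x

theorem mixedDerivSum_eq_sum_rotate
    (hsym : ∀ (σ : Equiv.Perm (Fin k)) (μ : Fin k → Fin n), g (μ ∘ σ) = g μ)
    {a j : ℕ} (h : a + j < k) (x : Fin n → ℝ) :
    mixedDerivSum f g a j x = ∑ μ : Fin k → Fin n, pds ((List.ofFn μ).take a)
      (pds (((List.ofFn μ).drop (a + 1)).take j) f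
        * pds (μ ⟨a, by omega⟩ :: (List.ofFn μ).drop (a + 1 + j)) (g μ)) x := by
  let τ := Fin.cycleIcc (⟨a, by omega⟩ : Fin k) ⟨a + j, h⟩
  rw [mixedDerivSum, ← (Equiv.arrowCongr τ.symm (Equiv.refl (Fin n))).sum_comp]
  refine sum_congr rfl fun ν _ => ?_
  have hA : ((List.ofFn ν).take a).length = a := by simp; omega
  have hB : (((List.ofFn ν).drop (a + 1)).take j).length = j := by simp; omega
  have hAB : ((List.ofFn ν).take a ++ ((List.ofFn ν).drop (a + 1)).take j).length = a + j := by
    simp only [List.length_append, hA, hB]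
  change pds (List.ofFn (ν ∘ τ) |>.take a) (pds ((List.ofFn (ν ∘ τ)).drop a |>.take j) f
    * pds ((List.ofFn (ν ∘ τ)).drop (a + j)) (g (ν ∘ τ))) x = _
  rw [hsym, List.ofFn_comp_cycleIcc ν h, List.drop_left' hAB, List.append_assoc,
    List.take_left' hA, List.drop_left' hA, List.take_left' hB]

theorem mixedDerivSum_succ_left (hU : IsOpen U) (hf : ContDiffOn ℝ (⊤ : ℕ∞) f U)
    (hg : ∀ μ, ContDiffOn ℝ (⊤ : ℕ∞) (g μ) U)
    (hsym : ∀ (σ : Equiv.Perm (Fin k)) (μ : Fin k → Fin n), g (μ ∘ σ) = g μ)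
    {a j : ℕ} (h : a + j < k) {x : Fin n → ℝ} (hx : x ∈ U) :
    mixedDerivSum f g (a + 1) j x = mixedDerivSum f g a (j + 1) x + mixedDerivSum f g a j x := by
  rw [mixedDerivSum_eq_sum_rotate hsym h, mixedDerivSum, mixedDerivSum, ← sum_add_distrib]
  refine sum_congr rfl fun μ _ => ?_
  rw [pds_take_succ_mul hU hf (hg μ) (by simp; omega) j hx, List.getElem_ofFn]

theorem mixedDerivSum_eq_sum_choose (hU : IsOpen U) (hf : ContDiffOn ℝ (⊤ : ℕ∞) f U)
    (hg : ∀ μ, ContDiffOn ℝ (⊤ : ℕ∞) (g μ) U)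
    (hsym : ∀ (σ : Equiv.Perm (Fin k)) (μ : Fin k → Fin n), g (μ ∘ σ) = g μ)
    {x : Fin n → ℝ} (hx : x ∈ U) (a : ℕ) {j : ℕ} (h : a + j ≤ k) :
    mixedDerivSum f g a j x
      = ∑ i ∈ range (a + 1), (a.choose i : ℝ) * mixedDerivSum f g 0 (i + j) x := by
  induction a generalizing j with
  | zero => simp
  | succ a ih =>
    rw [mixedDerivSum_succ_left hU hf hg hsym (by omega) hx, ih (by omega), ih (by omega),
      sum_choose_succ_mul (fun i _ => mixedDerivSum f g 0 (i + j) x), add_comm]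
    simp only [add_right_comm _ 1 j, add_assoc]

end MixedDerivSum

/-- **Inverse higher product formula** (Proposition A.3).
Let `U ⊆ ℝⁿ` be open, `f` smooth on `U`, `g^{μ₁…μₖ}` smooth on `U` and symmetric in its
indices.  Then (summing over all repeated greek indices)
`(∂_{μ₁}⋯∂_{μₖ} f) g^{μ₁…μₖ}
  = Σ_{p+q=k} binom(p+q,p) (−1)^q ∂_{μ₁}⋯∂_{μ_p}( f ∂_{ν₁}⋯∂_{ν_q} g^{μ₁…μ_p ν₁…ν_q} )`. -/
theorem inverse_higher_product_formula
    (n k : ℕ) (U : Set (Fin n → ℝ)) (hU : IsOpen U)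
    (f : (Fin n → ℝ) → ℝ) (hf : ContDiffOn ℝ (⊤ : ℕ∞) f U)
    (g : (Fin k → Fin n) → (Fin n → ℝ) → ℝ)
    (hg : ∀ μ, ContDiffOn ℝ (⊤ : ℕ∞) (g μ) U)
    (hsym : ∀ (σ : Equiv.Perm (Fin k)) (μ : Fin k → Fin n), g (μ ∘ σ) = g μ) :
    ∀ x ∈ U,
      ∑ μ : Fin k → Fin n, pds (List.ofFn μ) f x * g μ x
        = ∑ p ∈ Finset.range (k + 1), (k.choose p : ℝ) * (-1 : ℝ) ^ (k - p) *
            ∑ μ : Fin k → Fin n,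
              pds ((List.ofFn μ).take p)
                (fun y => f y * pds ((List.ofFn μ).drop p) (g μ) y) x := by
  intro x hx
  have hlhs : ∑ μ : Fin k → Fin n, pds (List.ofFn μ) f x * g μ x = mixedDerivSum f g 0 k x := by
    simp [mixedDerivSum, pds, List.take_of_length_le, List.drop_of_length_le]
  have hrhs (p : ℕ) (hp : p ∈ range (k + 1)) :
      ∑ μ : Fin k → Fin n, pds ((List.ofFn μ).take p)
          (fun y => f y * pds ((List.ofFn μ).drop p) (g μ) y) x
        = ∑ i ∈ range (p + 1), (p.choose i : ℝ) * mixedDerivSum f g 0 i x :=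
    mixedDerivSum_eq_sum_choose hU hf hg hsym hx p (j := 0) (mem_range_succ_iff.mp hp)
  rw [hlhs, sum_congr rfl fun p hp => by rw [hrhs p hp]]
  exact (sum_choose_mul_neg_one_pow_mul_sum_choose k (mixedDerivSum f g 0 · x)).symm

end
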